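/- arXiv:2501.14696 — 5 statements merged into one kernel-verified Lean document; each statement's English description precedes it below -/
import Mathlib

section
/- Let X ∈ ℝⁿ, u ∈ L^∞([0,D];ℝ), and let p : [0,D] → ℝⁿ be a continuous function satisfying p(x) = X + ∫₀ˣ f(p(ξ), u(ξ)) dξ. Define the direct backstepping transform w(x) = u(x) − κ(p(x)). Then |X| + ||w||_∞ ≤ M₃·(|X| + ||u||_∞), where M₃ = 1 + κ₀ max{1, LD} e^{LD}. -/
/-- Sup (essential supremum surrogate) norm of a scalar function over `[0, D]`. -/
noncomputable def supN (D : ℝ) (g : ℝ → ℝ) : ℝ :=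
  sSup ((fun x => |g x|) '' Set.Icc 0 D)

set_option maxHeartbeats 1000000 in
/-- norm bound for the direct backstepping transformation.  With `p`
the predictor and `w(x) = u(x) − κ(p(x))` the direct backstepping transform,
`|X| + ‖w‖_∞ ≤ M₃ (|X| + ‖u‖_∞)`, where `M₃ = 1 + κ₀ max{1, LD} e^{LD}`. -/
theorem statement_11 {n : ℕ}
    (f : EuclideanSpace ℝ (Fin n) → ℝ → EuclideanSpace ℝ (Fin n))
    (kap : EuclideanSpace ℝ (Fin n) → ℝ)
    (L k0 D : ℝ) (hL : 0 < L) (hk0 : 0 < k0) (hD : 0 < D)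
    (hf0 : f 0 0 = 0)
    (hfC1 : ContDiff ℝ 1 (fun q : EuclideanSpace ℝ (Fin n) × ℝ => f q.1 q.2))
    (hfLip : ∀ (X1 X2 : EuclideanSpace ℝ (Fin n)) (u1 u2 : ℝ),
      ‖f X1 u1 - f X2 u2‖ ≤ L * ‖X1 - X2‖ + L * |u1 - u2|)
    (hkap0 : kap 0 = 0) (hkapC1 : ContDiff ℝ 1 kap)
    (hkapLip : ∀ p q : EuclideanSpace ℝ (Fin n), |kap p - kap q| ≤ k0 * ‖p - q‖)
    (M3 : ℝ) (hM3 : M3 = 1 + k0 * max 1 (L * D) * Real.exp (L * D))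
    (X : EuclideanSpace ℝ (Fin n)) (u : ℝ → ℝ)
    (p : ℝ → EuclideanSpace ℝ (Fin n))
    (hpcont : ContinuousOn p (Set.Icc 0 D))
    (hp : ∀ x ∈ Set.Icc (0:ℝ) D, p x = X + ∫ ξ in (0:ℝ)..x, f (p ξ) (u ξ)) :
    ‖X‖ + supN D (fun x => u x - kap (p x)) ≤ M3 * (‖X‖ + supN D u) := by
  classical
  have hexp : (1:ℝ) ≤ Real.exp (L * D) := by
    rw [← Real.exp_zero]
    exact Real.exp_le_exp.2 (by positivity)
  have hmax : (1:ℝ) ≤ max 1 (L * D) := le_max_left _ _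
  have hmax0 : (0:ℝ) ≤ max 1 (L * D) := le_trans zero_le_one hmax
  have hcnn : 0 ≤ k0 * max 1 (L * D) * Real.exp (L * D) :=
    mul_nonneg (mul_nonneg hk0.le hmax0) (Real.exp_pos _).le
  have hM3ge : (1:ℝ) ≤ M3 := by rw [hM3]; linarith
  have hD0 : (0:ℝ) ∈ Set.Icc (0:ℝ) D := ⟨le_refl _, hD.le⟩
  have hXnn : (0:ℝ) ≤ ‖X‖ := norm_nonneg _
  by_cases hb : BddAbove ((fun x => |u x|) '' Set.Icc 0 D)
  · -- bounded case
    set S : ℝ := supN D u with hS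
    have hub : ∀ x ∈ Set.Icc (0:ℝ) D, |u x| ≤ S :=
      fun x hx => le_csSup hb ⟨x, hx, rfl⟩
    have hS0 : 0 ≤ S := le_trans (abs_nonneg _) (hub 0 hD0)
    have hXS : 0 ≤ ‖X‖ + S := by linarith
    -- continuous extension of p
    set P : ℝ → EuclideanSpace ℝ (Fin n) :=
      fun ξ => p ((Set.projIcc 0 D hD.le ξ : Set.Icc (0:ℝ) D) : ℝ) with hP
    have hPcont : Continuous P :=
      hpcont.comp_continuous (continuous_subtype_val.comp continuous_projIcc)
        (fun x => (Set.projIcc 0 D hD.le x).2)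
    have hPeq : ∀ ξ ∈ Set.Icc (0:ℝ) D, P ξ = p ξ := by
      intro ξ hξ
      simp [hP, Set.projIcc_of_mem hD.le hξ]
    set φ : ℝ → ℝ := fun ξ => L * ‖P ξ‖ + L * S with hφ
    have hφc : Continuous φ := by
      simp only [hφ]; continuity
    have hφ0 : ∀ ξ, 0 ≤ φ ξ := fun ξ => by
      simp only [hφ]; positivity
    set F : ℝ → ℝ := fun x => ∫ ξ in (0:ℝ)..x, φ ξ with hF
    have hF' : ∀ x, HasDerivAt F (φ x) x := fun x =>
      (hφc.integral_hasStrictDerivAt 0 x).hasDerivAt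
    -- pointwise norm bound on f(p ξ, u ξ)
    have hgb : ∀ ξ ∈ Set.Icc (0:ℝ) D, ‖f (p ξ) (u ξ)‖ ≤ φ ξ := by
      intro ξ hξ
      have h0 := hfLip (p ξ) 0 (u ξ) 0
      rw [hf0, sub_zero, sub_zero, sub_zero] at h0
      have h1 := hub ξ hξ
      have h2 : L * |u ξ| ≤ L * S := mul_le_mul_of_nonneg_left h1 hL.le
      simp only [hφ, hPeq ξ hξ]
      linarith
    -- key integral bound
    have hpb : ∀ x ∈ Set.Icc (0:ℝ) D, ‖p x‖ ≤ ‖X‖ + F x := by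
      intro x hx
      rw [hp x hx]
      refine le_trans (norm_add_le _ _) (add_le_add_right ?_ _)
      calc ‖∫ ξ in (0:ℝ)..x, f (p ξ) (u ξ)‖
          ≤ ∫ ξ in (0:ℝ)..x, ‖f (p ξ) (u ξ)‖ :=
            intervalIntegral.norm_integral_le_integral_norm hx.1
        _ ≤ F x := by
            simp only [hF]
            rw [intervalIntegral.integral_of_le hx.1, intervalIntegral.integral_of_le hx.1]
            refine MeasureTheory.integral_mono_of_nonneg
              (Filter.Eventually.of_forall (fun ξ => norm_nonneg _)) hφc.integrableOn_Ioc ?_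
            refine (MeasureTheory.ae_restrict_mem measurableSet_Ioc).mono (fun ξ hξ => ?_)
            exact hgb ξ ⟨hξ.1.le, hξ.2.trans hx.2⟩
    -- Grönwall
    have hgron : ∀ x ∈ Set.Icc (0:ℝ) D,
        ‖F x‖ ≤ gronwallBound 0 L (L * (‖X‖ + S)) (x - 0) := by
      refine norm_le_gronwallBound_of_norm_deriv_right_le
        (fun x _ => (hF' x).continuousAt.continuousWithinAt)
        (fun x _ => (hF' x).hasDerivWithinAt) ?_ ?_
      · simp [hF, Real.norm_eq_abs]
      · intro x hx
        have hx' : x ∈ Set.Icc (0:ℝ) D := ⟨hx.1, hx.2.le⟩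
        have h1 : ‖p x‖ ≤ ‖X‖ + F x := hpb x hx'
        have h1' : L * ‖p x‖ ≤ L * (‖X‖ + F x) := mul_le_mul_of_nonneg_left h1 hL.le
        have h2 : L * F x ≤ L * |F x| := mul_le_mul_of_nonneg_left (le_abs_self _) hL.le
        rw [Real.norm_eq_abs, Real.norm_eq_abs, abs_of_nonneg (hφ0 x)]
        simp only [hφ, hPeq x hx']
        nlinarith
    have hpfinal : ∀ x ∈ Set.Icc (0:ℝ) D, ‖p x‖ ≤ (‖X‖ + S) * Real.exp (L * D) := by
      intro x hx
      have h1 := hpb x hx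
      have h2 := hgron x hx
      rw [gronwallBound_of_K_ne_0 hL.ne'] at h2
      have hεL : L * (‖X‖ + S) / L = ‖X‖ + S := by field_simp
      simp only [Real.norm_eq_abs, sub_zero, zero_mul, zero_add, hεL] at h2
      have h3 : F x ≤ (‖X‖ + S) * (Real.exp (L * x) - 1) :=
        le_trans (le_abs_self _) h2
      have hex : Real.exp (L * x) ≤ Real.exp (L * D) :=
        Real.exp_le_exp.2 (mul_le_mul_of_nonneg_left hx.2 hL.le)
      have h5 : (‖X‖ + S) * Real.exp (L * x) ≤ (‖X‖ + S) * Real.exp (L * D) :=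
        mul_le_mul_of_nonneg_left hex hXS
      nlinarith
    -- bound on w
    set B : ℝ := S + k0 * max 1 (L * D) * Real.exp (L * D) * (‖X‖ + S) with hB
    have hB0 : 0 ≤ B := by
      have : 0 ≤ k0 * max 1 (L * D) * Real.exp (L * D) * (‖X‖ + S) :=
        mul_nonneg hcnn hXS
      simp only [hB]; linarith
    have hwb : ∀ x ∈ Set.Icc (0:ℝ) D, |u x - kap (p x)| ≤ B := by
      intro x hx
      have h1 : |kap (p x)| ≤ k0 * ‖p x‖ := by
        have := hkapLip (p x) 0
        rwa [hkap0, sub_zero, sub_zero] at this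
      have h2 := hpfinal x hx
      have h3 := hub x hx
      have h4 : k0 * ‖p x‖ ≤ k0 * ((‖X‖ + S) * Real.exp (L * D)) :=
        mul_le_mul_of_nonneg_left h2 hk0.le
      have h5 : k0 * ((‖X‖ + S) * Real.exp (L * D))
          ≤ k0 * max 1 (L * D) * Real.exp (L * D) * (‖X‖ + S) := by
        have hE : (0:ℝ) < Real.exp (L * D) := Real.exp_pos _
        have hkey := mul_le_mul_of_nonneg_left hmax
          (mul_nonneg (mul_nonneg hk0.le hXS) hE.le)
        nlinarith [hkey]
      calc |u x - kap (p x)| ≤ |u x| + |kap (p x)| := abs_sub _ _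
        _ ≤ B := by simp only [hB]; linarith
    have hsup : supN D (fun x => u x - kap (p x)) ≤ B := by
      refine Real.sSup_le ?_ hB0
      rintro y ⟨x, hx, rfl⟩
      exact hwb x hx
    rw [hB] at hsup
    have hring : (1 + k0 * max 1 (L * D) * Real.exp (L * D)) * (‖X‖ + S)
        = ‖X‖ + (S + k0 * max 1 (L * D) * Real.exp (L * D) * (‖X‖ + S)) := by ring
    rw [hM3, hring]
    linarith
  · -- unbounded case: both sups are junk 0
    have hu0 : supN D u = 0 := Real.sSup_of_not_bddAbove hb
    obtain ⟨C, hC⟩ : ∃ C, ∀ x ∈ Set.Icc (0:ℝ) D, ‖kap (p x)‖ ≤ C :=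
      (isCompact_Icc).exists_bound_of_continuousOn
        (hkapC1.continuous.comp_continuousOn hpcont)
    have hwb : ¬ BddAbove ((fun x => |u x - kap (p x)|) '' Set.Icc 0 D) := by
      intro ⟨Cw, hCw⟩
      apply hb
      refine ⟨Cw + C, ?_⟩
      rintro y ⟨x, hx, rfl⟩
      have h1 : |u x - kap (p x)| ≤ Cw := hCw ⟨x, hx, rfl⟩
      have h2 : ‖kap (p x)‖ ≤ C := hC x hx
      rw [Real.norm_eq_abs] at h2
      calc |u x| = |(u x - kap (p x)) + kap (p x)| := by ring_nf
        _ ≤ |u x - kap (p x)| + |kap (p x)| := abs_add_le _ _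
        _ ≤ Cw + C := add_le_add h1 h2
    have hw0 : supN D (fun x => u x - kap (p x)) = 0 := Real.sSup_of_not_bddAbove hwb
    rw [hu0, hw0]
    nlinarith
end

section
/- Let X ∈ ℝⁿ, w ∈ L^∞([0,D];ℝ), and let π : [0,D] → ℝⁿ be a continuous function satisfying π(x) = X + ∫₀ˣ f(π(ξ), κ(π(ξ)) + w(ξ)) dξ. Define the inverse backstepping transform u(x) = w(x) + κ(π(x)). Then M₄·(|X| + ||u||_∞) ≤ |X| + ||w||_∞, where M₄ = 1/(1 + κ₀ max{1, κ₀LD} e^{LD(1+κ₀)}). -/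
set_option maxHeartbeats 2000000 in
/-- norm bound for the inverse backstepping transformation.  With `π`
solving `π(x) = X + ∫₀ˣ f(π(ξ), κ(π(ξ)) + w(ξ)) dξ` and `u(x) = w(x) + κ(π(x))` the inverse
backstepping transform, `M₄ (|X| + ‖u‖_∞) ≤ |X| + ‖w‖_∞`, where
`M₄ = 1/(1 + κ₀ max{1, κ₀LD} e^{LD(1+κ₀)})`. -/
theorem statement_12 {n : ℕ}
    (f : EuclideanSpace ℝ (Fin n) → ℝ → EuclideanSpace ℝ (Fin n))
    (kap : EuclideanSpace ℝ (Fin n) → ℝ)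
    (L k0 D : ℝ) (hL : 0 < L) (hk0 : 0 < k0) (hD : 0 < D)
    (hf0 : f 0 0 = 0)
    (hfC1 : ContDiff ℝ 1 (fun q : EuclideanSpace ℝ (Fin n) × ℝ => f q.1 q.2))
    (hfLip : ∀ (X1 X2 : EuclideanSpace ℝ (Fin n)) (u1 u2 : ℝ),
      ‖f X1 u1 - f X2 u2‖ ≤ L * ‖X1 - X2‖ + L * |u1 - u2|)
    (hkap0 : kap 0 = 0) (hkapC1 : ContDiff ℝ 1 kap)
    (hkapLip : ∀ p q : EuclideanSpace ℝ (Fin n), |kap p - kap q| ≤ k0 * ‖p - q‖)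
    (M4 : ℝ) (hM4 : M4 = (1 + k0 * max 1 (k0 * L * D) * Real.exp (L * D * (1 + k0)))⁻¹)
    (X : EuclideanSpace ℝ (Fin n)) (w : ℝ → ℝ)
    (pii : ℝ → EuclideanSpace ℝ (Fin n))
    (hpicont : ContinuousOn pii (Set.Icc 0 D))
    (hpi : ∀ x ∈ Set.Icc (0:ℝ) D,
        pii x = X + ∫ ξ in (0:ℝ)..x, f (pii ξ) (kap (pii ξ) + w ξ)) :
    M4 * (‖X‖ + supN D (fun x => w x + kap (pii x))) ≤ ‖X‖ + supN D w := by
  set E := Real.exp (L * D * (1 + k0)) with hE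
  have hEpos : 0 < E := Real.exp_pos _
  set M : ℝ := max 1 (k0 * L * D) with hM
  have hM1 : (1 : ℝ) ≤ M := le_max_left _ _
  have hRpos : 0 < 1 + k0 * M * E := by positivity
  have hMpos : (0:ℝ) < M := lt_of_lt_of_le one_pos hM1
  have hR1 : (1 : ℝ) ≤ 1 + k0 * M * E := by
    nlinarith [mul_pos (mul_pos hk0 hMpos) hEpos]
  have hkapb : ∀ p, |kap p| ≤ k0 * ‖p‖ := by
    intro p
    have := hkapLip p 0
    simpa [hkap0] using this
  have h0D : (0 : ℝ) ∈ Set.Icc (0:ℝ) D := ⟨le_refl _, hD.le⟩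
  by_cases hbdd : BddAbove ((fun x => |w x|) '' Set.Icc 0 D)
  · -- w is (sup-)bounded
    set W := supN D w with hW
    have hWle : ∀ x ∈ Set.Icc (0:ℝ) D, |w x| ≤ W := fun x hx =>
      le_csSup hbdd ⟨x, hx, rfl⟩
    have hW0 : 0 ≤ W := (abs_nonneg _).trans (hWle 0 h0D)
    set c := L * (1 + k0) with hc
    have hcpos : 0 < c := by positivity
    -- bound on the integrand
    have gbound : ∀ ξ ∈ Set.Icc (0:ℝ) D,
        ‖f (pii ξ) (kap (pii ξ) + w ξ)‖ ≤ c * ‖pii ξ‖ + L * W := by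
      intro ξ hξ
      have h1 : ‖f (pii ξ) (kap (pii ξ) + w ξ)‖ ≤
          L * ‖pii ξ‖ + L * |kap (pii ξ) + w ξ| := by
        have := hfLip (pii ξ) 0 (kap (pii ξ) + w ξ) 0
        simpa [hf0] using this
      have h2 : |kap (pii ξ) + w ξ| ≤ k0 * ‖pii ξ‖ + W :=
        (abs_add_le _ _).trans (add_le_add (hkapb _) (hWle ξ hξ))
      nlinarith [norm_nonneg (pii ξ)]
    -- a globally continuous surrogate of the Gronwall integrand
    set pr : ℝ → ℝ := fun ξ => max 0 (min ξ D) with hpr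
    have hprcont : Continuous pr := continuous_const.max (continuous_id.min continuous_const)
    have hprmem : ∀ ξ, pr ξ ∈ Set.Icc (0:ℝ) D := fun ξ =>
      ⟨le_max_left _ _, max_le hD.le (min_le_right _ _)⟩
    have hpreq : ∀ ξ ∈ Set.Icc (0:ℝ) D, pr ξ = ξ := by
      intro ξ hξ
      simp [hpr, min_eq_left hξ.2, max_eq_right hξ.1]
    set ρ : ℝ → ℝ := fun ξ => c * ‖pii (pr ξ)‖ + L * W with hρ
    have hρcont : Continuous ρ :=
      (continuous_const.mul (hpicont.comp_continuous hprcont hprmem).norm).add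
        continuous_const
    have hρnn : ∀ ξ, 0 ≤ ρ ξ := fun ξ => by positivity
    have hρeq : ∀ ξ ∈ Set.Icc (0:ℝ) D, ρ ξ = c * ‖pii ξ‖ + L * W := by
      intro ξ hξ; simp [hρ, hpreq ξ hξ]
    set ψ : ℝ → ℝ := fun x => ‖X‖ + ∫ t in (0:ℝ)..x, ρ t with hψ
    have hψd : ∀ x, HasDerivAt ψ (ρ x) x := fun x =>
      ((hρcont.integral_hasStrictDerivAt 0 x).hasDerivAt).const_add ‖X‖
    have hψcont : Continuous ψ :=
      continuous_iff_continuousAt.2 fun x => (hψd x).continuousAt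
    -- the integral inequality: ‖π x‖ ≤ ψ x on [0, D]
    have hφψ : ∀ x ∈ Set.Icc (0:ℝ) D, ‖pii x‖ ≤ ψ x := by
      intro x hx
      rw [hpi x hx]
      have hsub : Set.Icc (0:ℝ) x ⊆ Set.Icc (0:ℝ) D :=
        Set.Icc_subset_Icc le_rfl hx.2
      have key : ‖∫ ξ in (0:ℝ)..x, f (pii ξ) (kap (pii ξ) + w ξ)‖ ≤
          ∫ t in (0:ℝ)..x, ρ t := by
        by_cases hint : IntervalIntegrable
            (fun ξ => f (pii ξ) (kap (pii ξ) + w ξ)) MeasureTheory.volume 0 x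
        · calc ‖∫ ξ in (0:ℝ)..x, f (pii ξ) (kap (pii ξ) + w ξ)‖
              ≤ ∫ ξ in (0:ℝ)..x, ‖f (pii ξ) (kap (pii ξ) + w ξ)‖ :=
                intervalIntegral.norm_integral_le_integral_norm hx.1
            _ ≤ ∫ t in (0:ℝ)..x, ρ t := by
                apply intervalIntegral.integral_mono_on hx.1 hint.norm
                  (hρcont.intervalIntegrable 0 x)
                intro ξ hξ
                rw [hρeq ξ (hsub hξ)]
                exact gbound ξ (hsub hξ)
        · rw [intervalIntegral.integral_undef hint]
          simp only [norm_zero]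
          exact intervalIntegral.integral_nonneg hx.1 fun t _ => hρnn t
      calc ‖X + ∫ ξ in (0:ℝ)..x, f (pii ξ) (kap (pii ξ) + w ξ)‖
          ≤ ‖X‖ + ‖∫ ξ in (0:ℝ)..x, f (pii ξ) (kap (pii ξ) + w ξ)‖ := norm_add_le _ _
        _ ≤ ψ x := add_le_add_right key _
    -- Gronwall on ψ
    have hψgron : ∀ x ∈ Set.Icc (0:ℝ) D,
        ‖ψ x‖ ≤ gronwallBound ‖X‖ c (L * W) (x - 0) := by
      apply norm_le_gronwallBound_of_norm_deriv_right_le hψcont.continuousOn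
        (fun x _ => (hψd x).hasDerivWithinAt)
      · simp [hψ]
      · intro x hx
        have hx' : x ∈ Set.Icc (0:ℝ) D := ⟨hx.1, hx.2.le⟩
        have h1 : ρ x = c * ‖pii x‖ + L * W := hρeq x hx'
        have h2 : ‖pii x‖ ≤ ψ x := hφψ x hx'
        have h3 : ψ x ≤ ‖ψ x‖ := le_abs_self _
        rw [Real.norm_eq_abs, abs_of_nonneg (hρnn x), h1]
        have h4 : c * ‖pii x‖ ≤ c * ‖ψ x‖ :=
          mul_le_mul_of_nonneg_left (h2.trans h3) hcpos.le
        linarith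
    -- final pointwise bound on ‖π‖
    have hπbd : ∀ x ∈ Set.Icc (0:ℝ) D, ‖pii x‖ ≤ (‖X‖ + W) * E := by
      intro x hx
      have h1 : ‖pii x‖ ≤ gronwallBound ‖X‖ c (L * W) (x - 0) :=
        (hφψ x hx).trans ((le_abs_self _).trans (hψgron x hx))
      rw [gronwallBound_of_K_ne_0 hcpos.ne'] at h1
      simp only [] at h1
      set e := Real.exp (c * (x - 0)) with he
      have hcd : c * (x - 0) ≤ L * D * (1 + k0) := by
        rw [hc]; nlinarith [hx.1, hx.2]
      have hex : e ≤ E := by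
        rw [he, hE]; exact Real.exp_le_exp.2 hcd
      have he1 : (1:ℝ) ≤ e := by
        rw [he]
        apply Real.one_le_exp
        nlinarith [hx.1]
      have hdivW : L * W / c ≤ W := by
        rw [div_le_iff₀ hcpos, hc]
        nlinarith [mul_nonneg (mul_nonneg hW0 hL.le) hk0.le]
      have hdiv0 : 0 ≤ L * W / c := by positivity
      have t1 : ‖X‖ * e ≤ ‖X‖ * E := mul_le_mul_of_nonneg_left hex (norm_nonneg X)
      have t2 : L * W / c * (e - 1) ≤ W * E := by
        calc L * W / c * (e - 1) ≤ W * (e - 1) :=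
              mul_le_mul_of_nonneg_right hdivW (by linarith)
          _ ≤ W * E := mul_le_mul_of_nonneg_left (by linarith) hW0
      have hXWE : (‖X‖ + W) * E = ‖X‖ * E + W * E := by ring
      linarith
    -- bound on supN of u
    have hUbd : supN D (fun x => w x + kap (pii x)) ≤ W + k0 * ((‖X‖ + W) * E) := by
      apply Real.sSup_le
      · rintro y ⟨x, hx, rfl⟩
        have h1 : |w x + kap (pii x)| ≤ |w x| + |kap (pii x)| := abs_add_le _ _
        have h2 := hWle x hx
        have h3 : k0 * ‖pii x‖ ≤ k0 * ((‖X‖ + W) * E) :=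
          mul_le_mul_of_nonneg_left (hπbd x hx) hk0.le
        have h4 := hkapb (pii x)
        dsimp only
        linarith
      · have hXW : 0 ≤ ‖X‖ + W := by linarith [norm_nonneg X]
        nlinarith [mul_nonneg hk0.le (mul_nonneg hXW hEpos.le)]
    -- conclude
    rw [hM4]
    rw [inv_mul_le_iff₀ hRpos]
    have hXW : 0 ≤ ‖X‖ + W := by linarith [norm_nonneg X]
    have h0 : 0 ≤ k0 * E * (‖X‖ + W) := by positivity
    have key : k0 * ((‖X‖ + W) * E) ≤ k0 * M * E * (‖X‖ + W) := by
      nlinarith [mul_le_mul_of_nonneg_right hM1 h0]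
    have expand : (1 + k0 * M * E) * (‖X‖ + W) = (‖X‖ + W) + k0 * M * E * (‖X‖ + W) := by
      ring
    linarith [hUbd]
  · -- w is unbounded: then supN D w = 0 and supN D u = 0 as well
    have hw0 : supN D w = 0 := Real.sSup_of_not_bddAbove hbdd
    -- π is bounded on the compact interval
    obtain ⟨C, hC⟩ := isCompact_Icc.exists_bound_of_continuousOn hpicont
    have hu0 : supN D (fun x => w x + kap (pii x)) = 0 := by
      apply Real.sSup_of_not_bddAbove
      rintro ⟨B, hB⟩
      apply hbdd
      refine ⟨B + k0 * C, ?_⟩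
      rintro y ⟨x, hx, rfl⟩
      have h1 : |w x + kap (pii x)| ≤ B := hB ⟨x, hx, rfl⟩
      have h2 : |kap (pii x)| ≤ k0 * C := (hkapb _).trans
        (mul_le_mul_of_nonneg_left (hC x hx) hk0.le)
      have h5 : |w x| ≤ |w x + kap (pii x)| + |kap (pii x)| := by
        calc |w x| = |w x + kap (pii x) - kap (pii x)| := by congr 1; ring
          _ ≤ _ := abs_sub _ _
      dsimp only
      linarith
    simp only [hw0, hu0, add_zero]
    rw [hM4]
    rw [inv_mul_le_iff₀ hRpos]
    nlinarith [mul_le_mul_of_nonneg_right hR1 (norm_nonneg X)]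
end

section
/- Suppose the system Ẋ = f(X, κ(X)) is globally exponentially stable, i.e., there exist k, α > 0 such that every solution satisfies |X(t)| ≤ k|X(0)|e^{−αt}. Then there exist constants σ, M_σ, b₃ > 0 such that for every measurable bounded disturbance w : [0,∞) → ℝ and every absolutely continuous X : [0,∞) → ℝⁿ with Ẋ(t) = f(X(t), κ(X(t)) + w(t)) for almost every t, the following input-to-state stability estimate holds for all t ≥ 0: |X(t)| ≤ M_σ|X(0)|e^{−σt} + b₃ ess sup_{0≤s≤t}|w(s)|. -/
set_option maxHeartbeats 1000000

open MeasureTheory Set BoundedContinuousFunction NNReal intervalIntegral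


lemma my_gronwall {u : ℝ → ℝ} {T a ε K : ℝ} (hK : 0 ≤ K) (hε : 0 ≤ ε)
    (hu : ContinuousOn u (Icc 0 T)) (hu0 : u 0 ≤ a)
    (hineq : ∀ t ∈ Icc (0:ℝ) T, u t ≤ a + ∫ s in (0:ℝ)..t, (K * u s + ε)) :
    ∀ t ∈ Icc (0:ℝ) T, u t ≤ (a + ε * t) * Real.exp (K * t) := by
  intro t ht
  have key : ∀ η > (0:ℝ), u t ≤ (a + η + ε * t) * Real.exp (K * t) := by
    intro η hη
    set v : ℝ → ℝ := fun s => (a + η + ε * s) * Real.exp (K * s) with hv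
    have hvd : ∀ s : ℝ, HasDerivAt v
        (ε * Real.exp (K * s) + (a + η + ε * s) * (K * Real.exp (K * s))) s := by
      intro s
      have h1 : HasDerivAt (fun s : ℝ => a + η + ε * s) ε s := by
        simpa using ((hasDerivAt_id s).const_mul ε).const_add (a + η)
      have h2 : HasDerivAt (fun s : ℝ => Real.exp (K * s)) (K * Real.exp (K * s)) s := by
        simpa [mul_comm] using ((hasDerivAt_id s).const_mul K).exp
      exact h1.mul h2
    have hvcont : Continuous v := by fun_prop
    have hv0 : v 0 = a + η := by simp [hv]
    by_contra hcon
    push_neg at hcon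
    set S : Set ℝ := {s ∈ Icc (0:ℝ) T | v s ≤ u s} with hS
    have hSne : S.Nonempty := ⟨t, ht, le_of_lt hcon⟩
    have hScl : IsClosed S := isClosed_Icc.isClosed_le hvcont.continuousOn hu
    have hSbdd : BddBelow S := ⟨0, fun s hs => hs.1.1⟩
    set t₀ : ℝ := sInf S with ht₀
    have ht₀S : t₀ ∈ S := hScl.csInf_mem hSne hSbdd
    have ht₀Icc : t₀ ∈ Icc (0:ℝ) T := ht₀S.1
    have ht₀pos : 0 < t₀ := by
      rcases lt_or_eq_of_le ht₀Icc.1 with h | h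
      · exact h
      · exfalso
        have := ht₀S.2
        rw [← h, hv0] at this
        linarith
    have hle : ∀ τ ∈ Icc (0:ℝ) t₀, τ ≠ t₀ → u τ ≤ v τ := by
      intro τ hτ hne
      by_contra h
      push_neg at h
      have : τ ∈ S := ⟨⟨hτ.1, le_trans hτ.2 ht₀Icc.2⟩, le_of_lt h⟩
      exact hne (le_antisymm hτ.2 (csInf_le hSbdd this))
    -- integrability facts
    have huI : IntervalIntegrable (fun s => K * u s + ε) volume 0 t₀ := by
      apply ContinuousOn.intervalIntegrable
      apply ContinuousOn.add
      · exact (continuousOn_const.mul (hu.mono (fun x hx => by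
          rw [uIcc_of_le ht₀pos.le] at hx
          exact ⟨hx.1, le_trans hx.2 ht₀Icc.2⟩)))
      · exact continuousOn_const
    have hKv : Continuous (fun s => K * v s + ε) := (continuous_const.mul hvcont).add continuous_const
    have hvI : IntervalIntegrable (fun s => K * v s + ε) volume 0 t₀ :=
      hKv.intervalIntegrable 0 t₀
    have step1 : u t₀ ≤ a + ∫ s in (0:ℝ)..t₀, (K * u s + ε) := hineq t₀ ht₀Icc
    have step2 : (∫ s in (0:ℝ)..t₀, (K * u s + ε)) ≤ ∫ s in (0:ℝ)..t₀, (K * v s + ε) := by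
      apply intervalIntegral.integral_mono_ae_restrict ht₀pos.le huI hvI
      have hnull : volume ({t₀} : Set ℝ) = 0 := measure_singleton t₀
      have : ∀ᵐ (s : ℝ) ∂(volume.restrict (Icc 0 t₀)), s ≠ t₀ := by
        rw [ae_restrict_iff' measurableSet_Icc]
        filter_upwards [measure_eq_zero_iff_ae_notMem.mp hnull] with s hs _ 
        simpa using hs
      filter_upwards [this, ae_restrict_mem measurableSet_Icc] with s hs hsI
      have := hle s hsI hs
      nlinarith [this]
    have step3 : (∫ s in (0:ℝ)..t₀, (K * v s + ε)) ≤
        ∫ s in (0:ℝ)..t₀, (ε * Real.exp (K * s) + (a + η + ε * s) * (K * Real.exp (K * s))) := by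
      have hc2 : Continuous (fun s => ε * Real.exp (K * s) + (a + η + ε * s) * (K * Real.exp (K * s))) := by fun_prop
      apply intervalIntegral.integral_mono_on ht₀pos.le hvI (hc2.intervalIntegrable 0 t₀)
      intro s hs
      have h1 : 1 ≤ Real.exp (K * s) := Real.one_le_exp (mul_nonneg hK hs.1)
      have : K * v s = (a + η + ε * s) * (K * Real.exp (K * s)) := by ring
      rw [this]
      nlinarith
    have step4 : (∫ s in (0:ℝ)..t₀,
        (ε * Real.exp (K * s) + (a + η + ε * s) * (K * Real.exp (K * s)))) = v t₀ - v 0 := by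
      apply intervalIntegral.integral_eq_sub_of_hasDerivAt
      · intro s _
        exact hvd s
      · exact (by fun_prop : Continuous (fun s => ε * Real.exp (K * s) + (a + η + ε * s) * (K * Real.exp (K * s)))).intervalIntegrable 0 t₀
    have : u t₀ ≤ v t₀ - η := by
      rw [hv0] at step4
      linarith
    have := ht₀S.2
    linarith
  have hexp : 0 < Real.exp (K * t) := Real.exp_pos _
  refine le_of_forall_pos_le_add ?_
  intro δ hδ
  have := key (δ / Real.exp (K * t)) (by positivity)
  calc u t ≤ (a + δ / Real.exp (K * t) + ε * t) * Real.exp (K * t) := this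
    _ = (a + ε * t) * Real.exp (K * t) + δ := by field_simp; ring


lemma exp_int (c : ℝ) (hc : c ≠ 0) (t : ℝ) :
    ∫ s in (0:ℝ)..t, Real.exp (c*s) = (Real.exp (c*t) - 1)/c := by
  have : ∀ s ∈ uIcc (0:ℝ) t, HasDerivAt (fun s => Real.exp (c*s)/c) (Real.exp (c*s)) s := by
    intro s _
    have h2 : HasDerivAt (fun s : ℝ => Real.exp (c * s)) (c * Real.exp (c * s)) s := by
      simpa [mul_comm] using ((hasDerivAt_id s).const_mul c).exp
    have := h2.div_const c
    simpa [mul_comm, mul_div_assoc, mul_div_cancel_left₀ _ hc] using this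
  have := intervalIntegral.integral_eq_sub_of_hasDerivAt this
    ((by fun_prop : Continuous fun s => Real.exp (c*s)).intervalIntegrable 0 t)
  rw [this]
  field_simp
  simp

lemma norm_int_le_exp {E : Type*} [NormedAddCommGroup E] [NormedSpace ℝ E]
    (h : ℝ → E) (M c t : ℝ) (hc : 0 < c) (ht : 0 ≤ t) (hM : 0 ≤ M)
    (hcont : Continuous h) (hb : ∀ s, 0 ≤ s → s ≤ t → ‖h s‖ ≤ M * Real.exp (c*s)) :
    ‖∫ s in (0:ℝ)..t, h s‖ ≤ M * (Real.exp (c*t) - 1) / c := by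
  have h1 : ‖∫ s in (0:ℝ)..t, h s‖ ≤ ∫ s in (0:ℝ)..t, ‖h s‖ :=
    intervalIntegral.norm_integral_le_integral_norm ht
  have h2 : (∫ s in (0:ℝ)..t, ‖h s‖) ≤ ∫ s in (0:ℝ)..t, M * Real.exp (c*s) := by
    apply intervalIntegral.integral_mono_on ht
      (hcont.norm.intervalIntegrable 0 t)
      ((by fun_prop : Continuous fun s => M * Real.exp (c*s)).intervalIntegrable 0 t)
    intro s hs
    exact hb s hs.1 hs.2
  have h3 : (∫ s in (0:ℝ)..t, M * Real.exp (c*s)) = M * (Real.exp (c*t) - 1) / c := by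
    rw [intervalIntegral.integral_const_mul, exp_int c hc.ne' t]
    ring
  linarith

lemma damp_bound {c M : ℝ} (hc : 0 < c) (hM : 0 ≤ M) {τ : ℝ} (hτ : 0 ≤ τ) :
    Real.exp (-(c*τ)) * (M * (Real.exp (c*τ) - 1) / c) ≤ M / c := by
  have h1 : Real.exp (-(c*τ)) * (Real.exp (c*τ) - 1) = 1 - Real.exp (-(c*τ)) := by
    rw [mul_sub, ← Real.exp_add]
    simp
  have h2 : Real.exp (-(c*τ)) * (M * (Real.exp (c*τ) - 1) / c)
      = M * (Real.exp (-(c*τ)) * (Real.exp (c*τ) - 1)) / c := by ring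
  rw [h2, h1, div_le_div_iff₀ hc hc]
  nlinarith [Real.exp_pos (-(c*τ)), mul_nonneg (mul_nonneg hM (Real.exp_pos (-(c*τ))).le) hc.le]

lemma exists_global_solution {E : Type*} [NormedAddCommGroup E] [NormedSpace ℝ E]
    [CompleteSpace E]
    (g : E → E) (Λ : ℝ) (hΛ : 0 < Λ) (hg0 : g 0 = 0)
    (hg : ∀ x y : E, ‖g x - g y‖ ≤ Λ * ‖x - y‖) (x₀ : E) :
    ∃ Y : ℝ → E, Continuous Y ∧ Y 0 = x₀ ∧
      ∀ t : ℝ, 0 ≤ t → Y t = Y 0 + ∫ s in (0:ℝ)..t, g (Y s) := by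
  set c : ℝ := 2 * Λ with hc
  have hcpos : 0 < c := by positivity
  have hgcont : Continuous g := by
    rw [Metric.continuous_iff]
    intro x ε hε
    refine ⟨ε / Λ, by positivity, fun y hy => ?_⟩
    rw [dist_eq_norm] at *
    calc ‖g y - g x‖ ≤ Λ * ‖y - x‖ := hg y x
      _ < Λ * (ε / Λ) := by apply mul_lt_mul_of_pos_left hy hΛ
      _ = ε := by field_simp
  have hgnorm : ∀ x : E, ‖g x‖ ≤ Λ * ‖x‖ := by
    intro x
    simpa [hg0] using hg x 0
  -- the Picard map
  set h : (ℝ →ᵇ E) → ℝ → E := fun u s => g (Real.exp (c*s) • u s) with hh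
  have hhcont : ∀ u : ℝ →ᵇ E, Continuous (h u) := by
    intro u
    apply hgcont.comp
    exact (by fun_prop : Continuous fun s => Real.exp (c*s)).smul u.continuous
  have hhI : ∀ (u : ℝ →ᵇ E) (a b : ℝ), IntervalIntegrable (h u) volume a b :=
    fun u a b => (hhcont u).intervalIntegrable a b
  have hhb : ∀ (u : ℝ →ᵇ E) (s : ℝ), ‖h u s‖ ≤ (Λ * ‖u‖) * Real.exp (c*s) := by
    intro u s
    calc ‖h u s‖ ≤ Λ * ‖Real.exp (c*s) • u s‖ := hgnorm _
      _ = Λ * (Real.exp (c*s) * ‖u s‖) := by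
          rw [norm_smul, Real.norm_eq_abs, abs_of_pos (Real.exp_pos _)]
      _ ≤ Λ * (Real.exp (c*s) * ‖u‖) :=
          mul_le_mul_of_nonneg_left
            (mul_le_mul_of_nonneg_left (u.norm_coe_le_norm s) (Real.exp_pos (c*s)).le) hΛ.le
      _ = (Λ * ‖u‖) * Real.exp (c*s) := by ring
  set P : (ℝ →ᵇ E) → ℝ → E := fun u t =>
    Real.exp (-(c * max t 0)) • (x₀ + ∫ s in (0:ℝ)..(max t 0), h u s) with hP
  have hPcont : ∀ u : ℝ →ᵇ E, Continuous (P u) := by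
    intro u
    apply Continuous.smul (by fun_prop)
    apply Continuous.add continuous_const
    exact (intervalIntegral.continuous_primitive (hhI u) 0).comp
      (continuous_id.max continuous_const)
  have hPbound : ∀ (u : ℝ →ᵇ E) (t : ℝ), ‖P u t‖ ≤ ‖x₀‖ + ‖u‖ / 2 := by
    intro u t
    set τ := max t 0 with hτ
    have hτ0 : 0 ≤ τ := le_max_right t 0
    have hint : ‖∫ s in (0:ℝ)..τ, h u s‖ ≤ (Λ * ‖u‖) * (Real.exp (c*τ) - 1) / c :=
      norm_int_le_exp (h u) (Λ * ‖u‖) c τ hcpos hτ0 (by positivity) (hhcont u)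
        (fun s _ _ => hhb u s)
    have hexp : Real.exp (-(c * τ)) ≤ 1 := Real.exp_le_one_iff.mpr (by nlinarith)
    have hexp2 : Real.exp (-(c*τ)) * Real.exp (c*τ) = 1 := by
      rw [← Real.exp_add]; simp
    have hexppos := Real.exp_pos (-(c*τ))
    calc ‖P u t‖ = Real.exp (-(c*τ)) * ‖x₀ + ∫ s in (0:ℝ)..τ, h u s‖ := by
          rw [hP, norm_smul, Real.norm_eq_abs, abs_of_pos (Real.exp_pos _)]
      _ ≤ Real.exp (-(c*τ)) * (‖x₀‖ + (Λ * ‖u‖) * (Real.exp (c*τ) - 1) / c) := by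
          apply mul_le_mul_of_nonneg_left _ hexppos.le
          exact le_trans (norm_add_le _ _) (by linarith)
      _ ≤ ‖x₀‖ + ‖u‖ / 2 := by
          have h1 : Real.exp (-(c*τ)) * ((Λ * ‖u‖) * (Real.exp (c*τ) - 1) / c)
              ≤ ‖u‖ / 2 := by
            have := damp_bound hcpos (by positivity : (0:ℝ) ≤ Λ * ‖u‖) hτ0
            have heq : (Λ * ‖u‖) / c = ‖u‖ / 2 := by rw [hc]; field_simp
            linarith
          have h2 : Real.exp (-(c*τ)) * ‖x₀‖ ≤ ‖x₀‖ := by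
            nlinarith [norm_nonneg x₀]
          nlinarith [hexppos.le]
  set Φ : (ℝ →ᵇ E) → (ℝ →ᵇ E) := fun u =>
    ofNormedAddCommGroup (P u) (hPcont u) (‖x₀‖ + ‖u‖/2) (hPbound u) with hΦ
  have hΦdist : ∀ u v : ℝ →ᵇ E, dist (Φ u) (Φ v) ≤ (1/2 : ℝ) * dist u v := by
    intro u v
    apply (dist_le (by positivity)).mpr
    intro t
    set τ := max t 0 with hτ
    have hτ0 : 0 ≤ τ := le_max_right t 0
    have hdiff : ∀ s : ℝ, ‖h u s - h v s‖ ≤ (Λ * dist u v) * Real.exp (c * s) := by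
      intro s
      calc ‖h u s - h v s‖ ≤ Λ * ‖Real.exp (c*s) • u s - Real.exp (c*s) • v s‖ := hg _ _
        _ = Λ * (Real.exp (c*s) * ‖u s - v s‖) := by
            rw [← smul_sub, norm_smul, Real.norm_eq_abs, abs_of_pos (Real.exp_pos _)]
        _ ≤ Λ * (Real.exp (c*s) * dist u v) := by
            have : ‖u s - v s‖ = dist (u s) (v s) := (dist_eq_norm _ _).symm
            rw [this]
            exact mul_le_mul_of_nonneg_left
              (mul_le_mul_of_nonneg_left (dist_coe_le_dist (f := u) (g := v) s)
                (Real.exp_pos (c*s)).le) hΛ.le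
        _ = (Λ * dist u v) * Real.exp (c*s) := by ring
    have hint : ‖∫ s in (0:ℝ)..τ, (h u s - h v s)‖
        ≤ (Λ * dist u v) * (Real.exp (c*τ) - 1) / c :=
      norm_int_le_exp _ _ c τ hcpos hτ0 (by positivity)
        ((hhcont u).sub (hhcont v)) (fun s _ _ => hdiff s)
    have key : dist (Φ u t) (Φ v t) =
        Real.exp (-(c*τ)) * ‖∫ s in (0:ℝ)..τ, (h u s - h v s)‖ := by
      rw [dist_eq_norm]
      show ‖P u t - P v t‖ = _
      rw [hP]
      simp only
      rw [← smul_sub, norm_smul, Real.norm_eq_abs, abs_of_pos (Real.exp_pos _)]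
      congr 2
      rw [add_sub_add_left_eq_sub, intervalIntegral.integral_sub (hhI u 0 τ) (hhI v 0 τ)]
    rw [key]
    have hexppos := Real.exp_pos (-(c*τ))
    have hexp2 : Real.exp (-(c*τ)) * Real.exp (c*τ) = 1 := by
      rw [← Real.exp_add]; simp
    have he1 : (1:ℝ) ≤ Real.exp (c*τ) := Real.one_le_exp (by positivity)
    have hd : 0 ≤ dist u v := dist_nonneg
    calc Real.exp (-(c*τ)) * ‖∫ s in (0:ℝ)..τ, (h u s - h v s)‖
        ≤ Real.exp (-(c*τ)) * ((Λ * dist u v) * (Real.exp (c*τ) - 1) / c) := by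
          nlinarith
      _ ≤ (Λ * dist u v) / c := damp_bound hcpos (by positivity) hτ0
      _ = (1/2 : ℝ) * dist u v := by rw [hc]; field_simp
  have hΦlip : LipschitzWith (1/2 : ℝ≥0) Φ := by
    apply LipschitzWith.of_dist_le_mul
    intro u v
    have := hΦdist u v
    have hco : ((1/2 : ℝ≥0) : ℝ) = (1/2 : ℝ) := by norm_num
    rw [hco]
    exact this
  have hΦcontr : ContractingWith (1/2 : ℝ≥0) Φ := ⟨by rw [← NNReal.coe_lt_coe]; norm_num, hΦlip⟩
  set u : ℝ →ᵇ E := ContractingWith.fixedPoint Φ hΦcontr with hu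
  have hfix : Φ u = u := hΦcontr.fixedPoint_isFixedPt
  have hcoe : ∀ t : ℝ, u t = P u t := by
    intro t
    conv_lhs => rw [← hfix]
    rfl
  set Y : ℝ → E := fun t => Real.exp (c * max t 0) • u t with hY
  have hYcont : Continuous Y :=
    ((by fun_prop : Continuous fun t : ℝ => Real.exp (c * max t 0))).smul u.continuous
  have hY0 : Y 0 = x₀ := by
    have h0 : u 0 = P u 0 := hcoe 0
    rw [hP] at h0
    simp at h0
    rw [hY]
    simp [h0]
  refine ⟨Y, hYcont, hY0, ?_⟩
  intro t ht
  have hmax : max t 0 = t := max_eq_left ht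
  have h1 : u t = P u t := hcoe t
  rw [hP] at h1
  simp only [hmax] at h1
  have h2 : Y t = Real.exp (c * t) • u t := by rw [hY]; simp [hmax]
  rw [h2, h1, smul_smul, ← Real.exp_add]
  have h3 : c * t + -(c * t) = 0 := by ring
  rw [h3, Real.exp_zero, one_smul, hY0]
  congr 1
  apply intervalIntegral.integral_congr
  intro s hs
  rw [uIcc_of_le ht] at hs
  have hs0 : max s 0 = s := max_eq_left hs.1
  rw [hY, hh]
  simp [hs0]

lemma solution_regular {E : Type*} [NormedAddCommGroup E] [NormedSpace ℝ E] [CompleteSpace E]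
    (X : ℝ → E) (F : ℝ → E) (Λ B : ℝ) (hΛ : 0 < Λ) (hB : 0 ≤ B)
    (hFb : ∀ s, ‖F s‖ ≤ Λ * ‖X s‖ + B)
    (hFm : ∀ s : Set ℝ, MeasurableSet s → AEStronglyMeasurable X (volume.restrict s) →
      AEStronglyMeasurable F (volume.restrict s))
    (hXeq : ∀ t : ℝ, 0 ≤ t → X t = X 0 + ∫ s in (0:ℝ)..t, F s) :
    ∀ t : ℝ, 0 ≤ t → IntervalIntegrable F volume 0 t ∧ ContinuousOn X (Icc 0 t) ∧
      ∀ s ∈ Icc (0:ℝ) t, ‖X s‖ ≤ (‖X 0‖ + B * s) * Real.exp (Λ * s) := by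
  -- helper: continuity of X on [0,T] given integrability
  have contX : ∀ T : ℝ, 0 ≤ T → IntervalIntegrable F volume 0 T →
      ContinuousOn X (Icc 0 T) := by
    intro T hT hI
    have h1 : ContinuousOn (fun r => X 0 + ∫ s in (0:ℝ)..r, F s) (Icc 0 T) := by
      apply ContinuousOn.add continuousOn_const
      have := continuousOn_primitive_interval
        (f := F) (μ := volume) (a := 0) (b := T)
        (by rwa [uIcc_of_le hT, ← intervalIntegrable_iff_integrableOn_Icc_of_le hT])
      rwa [uIcc_of_le hT] at this
    exact h1.congr (fun s hs => hXeq s hs.1)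
  -- helper: Gronwall bound on [0,T] given integrability
  have boundX : ∀ T : ℝ, 0 ≤ T → IntervalIntegrable F volume 0 T →
      ∀ s ∈ Icc (0:ℝ) T, ‖X s‖ ≤ (‖X 0‖ + B * s) * Real.exp (Λ * s) := by
    intro T hT hI
    have hXc := contX T hT hI
    have hucont : ContinuousOn (fun s => ‖X s‖) (Icc 0 T) := hXc.norm
    apply my_gronwall hΛ.le hB hucont le_rfl
    intro s hs
    have hIs : IntervalIntegrable F volume 0 s :=
      hI.mono_set (by rw [uIcc_of_le hs.1, uIcc_of_le hT]; exact Icc_subset_Icc le_rfl hs.2)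
    have h1 : ‖X s‖ ≤ ‖X 0‖ + ‖∫ r in (0:ℝ)..s, F r‖ := by
      rw [hXeq s hs.1]; exact norm_add_le _ _
    have h2 : ‖∫ r in (0:ℝ)..s, F r‖ ≤ ∫ r in (0:ℝ)..s, ‖F r‖ :=
      intervalIntegral.norm_integral_le_integral_norm hs.1
    have h3 : (∫ r in (0:ℝ)..s, ‖F r‖) ≤ ∫ r in (0:ℝ)..s, (Λ * ‖X r‖ + B) := by
      apply intervalIntegral.integral_mono_on hs.1 hIs.norm
      · apply ContinuousOn.intervalIntegrable
        rw [uIcc_of_le hs.1]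
        apply ContinuousOn.add _ continuousOn_const
        exact continuousOn_const.mul
          ((hXc.mono (Icc_subset_Icc le_rfl hs.2)).norm)
      · intro r _
        exact hFb r
    linarith
  -- the bootstrap
  intro t ht
  suffices hInt : IntervalIntegrable F volume 0 t by
    exact ⟨hInt, contX t ht hInt, boundX t ht hInt⟩
  rcases eq_or_lt_of_le ht with h | ht'
  · rw [← h]
  · -- t > 0
    set S : Set ℝ := {s | s ∈ Icc (0:ℝ) t ∧ IntervalIntegrable F volume 0 s} with hS
    have h0S : (0:ℝ) ∈ S := ⟨⟨le_rfl, ht⟩, by simp⟩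
    have hSne : S.Nonempty := ⟨0, h0S⟩
    have hSbdd : BddAbove S := ⟨t, fun s hs => hs.1.2⟩
    set b : ℝ := sSup S with hb
    have hb0 : 0 ≤ b := le_csSup hSbdd h0S
    have hbt : b ≤ t := csSup_le hSne (fun s hs => hs.1.2)
    have hPlt : ∀ s : ℝ, 0 ≤ s → s < b → IntervalIntegrable F volume 0 s := by
      intro s hs0 hsb
      obtain ⟨s', hs'S, hss'⟩ := exists_lt_of_lt_csSup hSne hsb
      exact hs'S.2.mono_set (by
        rw [uIcc_of_le hs0, uIcc_of_le (le_trans hs0 hss'.le)]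
        exact Icc_subset_Icc le_rfl hss'.le)
    -- X is continuous on [0, b)
    have hXcont_Ico : ContinuousOn X (Ico 0 b) := by
      intro x hx
      obtain ⟨s', hs'S, hxs'⟩ := exists_lt_of_lt_csSup hSne hx.2
      have hc := contX s' (le_trans hx.1 hxs'.le) hs'S.2
      have hcx : ContinuousWithinAt X (Icc 0 s') x := hc x ⟨hx.1, hxs'.le⟩
      apply hcx.mono_of_mem_nhdsWithin
      apply mem_nhdsWithin.mpr
      exact ⟨Iio s', isOpen_Iio, hxs', fun y hy => ⟨hy.2.1, le_of_lt hy.1⟩⟩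
    -- X is bounded on [0, b)
    have hXbdd : ∀ s ∈ Ico (0:ℝ) b, ‖X s‖ ≤ (‖X 0‖ + B * b) * Real.exp (Λ * b) := by
      intro s hs
      obtain ⟨s', hs'S, hss'⟩ := exists_lt_of_lt_csSup hSne hs.2
      have := boundX s' (le_trans hs.1 hss'.le) hs'S.2 s ⟨hs.1, hss'.le⟩
      have hsb : s ≤ b := hs.2.le
      have he : Real.exp (Λ * s) ≤ Real.exp (Λ * b) :=
        Real.exp_le_exp.mpr (by nlinarith)
      calc ‖X s‖ ≤ (‖X 0‖ + B * s) * Real.exp (Λ * s) := this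
        _ ≤ (‖X 0‖ + B * b) * Real.exp (Λ * b) :=
            mul_le_mul (by nlinarith) he (Real.exp_pos _).le
              (by nlinarith [norm_nonneg (X 0)])
    -- F is integrable on [0, b]
    have hbS : IntervalIntegrable F volume 0 b := by
      have hXm : AEStronglyMeasurable X (volume.restrict (Ico 0 b)) :=
        hXcont_Ico.aestronglyMeasurable measurableSet_Ico
      have hFmI : AEStronglyMeasurable F (volume.restrict (Ico 0 b)) :=
        hFm _ measurableSet_Ico hXm
      have hFint : IntegrableOn F (Ico 0 b) volume := by
        apply Integrable.mono' (g := fun _ => Λ * ((‖X 0‖ + B * b) * Real.exp (Λ * b)) + B)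
          (integrableOn_const measure_Ico_lt_top.ne) hFmI
        rw [ae_restrict_iff' measurableSet_Ico]
        filter_upwards with s hs
        have h1 := hFb s
        have h2 := hXbdd s hs
        nlinarith
      rw [intervalIntegrable_iff_integrableOn_Ioc_of_le hb0, IntegrableOn,
        ← Measure.restrict_congr_set Ioo_ae_eq_Ioc]
      exact (hFint.mono_set Ioo_subset_Ico_self)
    rcases eq_or_lt_of_le hbt with hbeq | hblt
    · rwa [hbeq] at hbS
    · -- b < t : F is nonintegrable beyond b, so X is constant there
      exfalso
      have hnon : ∀ s ∈ Ioc b t, ¬ IntervalIntegrable F volume 0 s := by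
        intro s hs hI
        have : s ∈ S := ⟨⟨le_trans hb0 hs.1.le, hs.2⟩, hI⟩
        exact absurd (le_csSup hSbdd this) (not_le.mpr hs.1)
      have hXconst : ∀ s ∈ Ioc b t, X s = X 0 := by
        intro s hs
        rw [hXeq s (le_trans hb0 hs.1.le), intervalIntegral.integral_undef (hnon s hs)]
        simp
      have hXm2 : AEStronglyMeasurable X (volume.restrict (Ioc b t)) := by
        apply aestronglyMeasurable_const.congr
        rw [Filter.EventuallyEq, ae_restrict_iff' measurableSet_Ioc]
        filter_upwards with s hs
        exact (hXconst s hs).symm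
      have hFm2 : AEStronglyMeasurable F (volume.restrict (Ioc b t)) :=
        hFm _ measurableSet_Ioc hXm2
      have hFint2 : IntegrableOn F (Ioc b t) volume := by
        apply Integrable.mono' (g := fun _ => Λ * ‖X 0‖ + B)
          (integrableOn_const measure_Ioc_lt_top.ne) hFm2
        rw [ae_restrict_iff' measurableSet_Ioc]
        filter_upwards with s hs
        have h1 := hFb s
        rw [hXconst s hs] at h1
        linarith
      have : IntervalIntegrable F volume 0 t := by
        rw [intervalIntegrable_iff_integrableOn_Ioc_of_le ht]
        have : Ioc (0:ℝ) t = Ioc 0 b ∪ Ioc b t := (Ioc_union_Ioc_eq_Ioc hb0 hbt).symm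
        rw [this]
        exact IntegrableOn.union
          ((intervalIntegrable_iff_integrableOn_Ioc_of_le hb0).mp hbS) hFint2
      exact hnon t ⟨hblt, le_rfl⟩ this

/-- ISS of the nominal closed loop.  If `Ẋ = f(X, κ(X))` is globally
exponentially stable (with constants `k, α > 0`), then there exist `σ, M_σ, b₃ > 0` such
that every (absolutely continuous, written in integral form) solution of the disturbed
system `Ẋ(t) = f(X(t), κ(X(t)) + w(t))`, with `w` measurable and bounded, satisfies
`|X(t)| ≤ M_σ |X(0)| e^{−σt} + b₃ sup_{0≤s≤t} |w(s)|` for all `t ≥ 0`. -/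
theorem statement_13 {n : ℕ}
    (f : EuclideanSpace ℝ (Fin n) → ℝ → EuclideanSpace ℝ (Fin n))
    (kap : EuclideanSpace ℝ (Fin n) → ℝ)
    (L k0 : ℝ) (hL : 0 < L) (hk0 : 0 < k0)
    (hf0 : f 0 0 = 0)
    (hfC1 : ContDiff ℝ 1 (fun q : EuclideanSpace ℝ (Fin n) × ℝ => f q.1 q.2))
    (hfLip : ∀ (X1 X2 : EuclideanSpace ℝ (Fin n)) (u1 u2 : ℝ),
      ‖f X1 u1 - f X2 u2‖ ≤ L * ‖X1 - X2‖ + L * |u1 - u2|)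
    (hkap0 : kap 0 = 0) (hkapC1 : ContDiff ℝ 1 kap)
    (hkapLip : ∀ p q : EuclideanSpace ℝ (Fin n), |kap p - kap q| ≤ k0 * ‖p - q‖)
    (k alpha : ℝ) (hk : 0 < k) (halpha : 0 < alpha)
    (hGES : ∀ X : ℝ → EuclideanSpace ℝ (Fin n),
      (∀ t : ℝ, 0 ≤ t → X t = X 0 + ∫ s in (0:ℝ)..t, f (X s) (kap (X s))) →
      ∀ t : ℝ, 0 ≤ t → ‖X t‖ ≤ k * ‖X 0‖ * Real.exp (-alpha * t)) :
    ∃ sig Msig b3 : ℝ, 0 < sig ∧ 0 < Msig ∧ 0 < b3 ∧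
      ∀ (w : ℝ → ℝ) (X : ℝ → EuclideanSpace ℝ (Fin n)),
        Measurable w → (∃ C : ℝ, ∀ t : ℝ, |w t| ≤ C) →
        (∀ t : ℝ, 0 ≤ t → X t = X 0 + ∫ s in (0:ℝ)..t, f (X s) (kap (X s) + w s)) →
        ∀ t : ℝ, 0 ≤ t →
          ‖X t‖ ≤ Msig * ‖X 0‖ * Real.exp (-sig * t)
            + b3 * sSup ((fun s => |w s|) '' Set.Icc 0 t) := by
  have hE : True := trivial
  set g : EuclideanSpace ℝ (Fin n) → EuclideanSpace ℝ (Fin n) := fun x => f x (kap x) with hgdef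
  set Λ : ℝ := L * (1 + k0) with hΛdef
  have hΛ : 0 < Λ := by positivity
  have hkapb : ∀ x : EuclideanSpace ℝ (Fin n), |kap x| ≤ k0 * ‖x‖ := by
    intro x
    simpa [hkap0] using hkapLip x 0
  have hgLip : ∀ x y : EuclideanSpace ℝ (Fin n), ‖g x - g y‖ ≤ Λ * ‖x - y‖ := by
    intro x y
    calc ‖g x - g y‖ ≤ L * ‖x - y‖ + L * |kap x - kap y| := hfLip x y (kap x) (kap y)
      _ ≤ L * ‖x - y‖ + L * (k0 * ‖x - y‖) := by
          have := hkapLip x y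
          nlinarith
      _ = Λ * ‖x - y‖ := by rw [hΛdef]; ring
  have hg0 : g 0 = 0 := by rw [hgdef]; simp [hkap0, hf0]
  have hf2cont : Continuous (fun q : EuclideanSpace ℝ (Fin n) × ℝ => f q.1 q.2) := hfC1.continuous
  -- choice of constants
  set M : ℝ := 2 * max k 1 with hM
  have hM1 : 1 < M := by
    have : (1:ℝ) ≤ max k 1 := le_max_right k 1
    nlinarith
  set T : ℝ := Real.log M / alpha with hT
  have hTpos : 0 < T := div_pos (Real.log_pos hM1) halpha
  have hkT : k * Real.exp (-alpha * T) ≤ 1/2 := by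
    have hαT : alpha * T = Real.log M := by
      rw [hT]; field_simp
    have : Real.exp (-alpha * T) = M⁻¹ := by
      rw [neg_mul, Real.exp_neg, hαT, Real.exp_log (by linarith)]
    rw [this, hM]
    rw [mul_inv_le_iff₀ (by nlinarith [le_max_right k 1])]
    have := le_max_left k 1
    nlinarith [le_max_right k 1]
  set D : ℝ := L * T * Real.exp (Λ * T) with hD
  have hDpos : 0 < D := by positivity
  refine ⟨Real.log 2 / T, 2 * k, (2 * k + 1) * D, div_pos (Real.log_pos one_lt_two) hTpos,
    by linarith, by nlinarith, ?_⟩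
  set sig : ℝ := Real.log 2 / T with hsig
  intro w X hwm hwb hXeq t ht
  obtain ⟨C, hwC⟩ := hwb
  have hC0 : 0 ≤ C := le_trans (abs_nonneg _) (hwC 0)
  set c : ℝ := sSup ((fun s => |w s|) '' Icc 0 t) with hc
  have hcbdd : BddAbove ((fun s => |w s|) '' Icc 0 t) := by
    refine ⟨C, ?_⟩
    rintro x ⟨s, _, rfl⟩
    exact hwC s
  have hwle : ∀ s ∈ Icc (0:ℝ) t, |w s| ≤ c :=
    fun s hs => le_csSup hcbdd ⟨s, hs, rfl⟩
  have hc0 : 0 ≤ c := le_trans (abs_nonneg _) (hwle 0 ⟨le_rfl, ht⟩)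
  set F : ℝ → EuclideanSpace ℝ (Fin n) := fun s => f (X s) (kap (X s) + w s) with hF
  have hFb : ∀ s, ‖F s‖ ≤ Λ * ‖X s‖ + L * C := by
    intro s
    calc ‖F s‖ = ‖f (X s) (kap (X s) + w s) - f 0 0‖ := by rw [hf0]; simp [hF]
      _ ≤ L * ‖X s - 0‖ + L * |kap (X s) + w s - 0| := hfLip _ _ _ _
      _ ≤ Λ * ‖X s‖ + L * C := by
          have h1 : |kap (X s) + w s - 0| ≤ k0 * ‖X s‖ + C := by
            have := hkapb (X s)
            have := hwC s
            rw [sub_zero]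
            calc |kap (X s) + w s| ≤ |kap (X s)| + |w s| := abs_add_le _ _
              _ ≤ k0 * ‖X s‖ + C := by linarith
          rw [sub_zero, hΛdef]
          nlinarith
  have hFm : ∀ s : Set ℝ, MeasurableSet s → AEStronglyMeasurable X (volume.restrict s) →
      AEStronglyMeasurable F (volume.restrict s) := by
    intro s hms hXm
    have h1 : AEStronglyMeasurable (fun r => kap (X r) + w r) (volume.restrict s) :=
      (hkapC1.continuous.comp_aestronglyMeasurable hXm).add hwm.aestronglyMeasurable
    exact hf2cont.comp_aestronglyMeasurable (hXm.prodMk h1)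
  have reg := solution_regular X F Λ (L * C) hΛ (by positivity) hFb hFm hXeq
  -- the key one-step estimate
  have key : ∀ t₀ s : ℝ, 0 ≤ t₀ → 0 ≤ s → t₀ + s ≤ t →
      ‖X (t₀ + s)‖ ≤ k * Real.exp (-alpha * s) * ‖X t₀‖ + L * c * s * Real.exp (Λ * s) := by
    intro t₀ s ht₀ hs hts
    obtain ⟨Y, hYc, hY0, hYeq⟩ := exists_global_solution g Λ hΛ hg0 hgLip (X t₀)
    have hYdecay := hGES Y hYeq
    set u : ℝ → ℝ := fun r => ‖X (t₀ + r) - Y r‖ with hu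
    have hXcont : ContinuousOn X (Icc 0 t) := (reg t ht).2.1
    have hInt : IntervalIntegrable F volume 0 t := (reg t ht).1
    have hucont : ContinuousOn u (Icc 0 s) := by
      apply ContinuousOn.norm
      apply ContinuousOn.sub _ hYc.continuousOn
      apply hXcont.comp (by fun_prop : Continuous fun r : ℝ => t₀ + r).continuousOn
      intro r hr
      simp only [mem_Icc] at hr ⊢
      exact ⟨by linarith [hr.1], by linarith [hr.2]⟩
    have hgcont : Continuous g := by
      have : g = (fun q : EuclideanSpace ℝ (Fin n) × ℝ => f q.1 q.2) ∘ (fun x => (x, kap x)) := rfl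
      rw [this]
      exact hf2cont.comp (continuous_id.prodMk hkapC1.continuous)
    have hgY : ∀ r : ℝ, IntervalIntegrable (fun τ => g (Y τ)) volume 0 r :=
      fun r => (hgcont.comp hYc).intervalIntegrable 0 r
    have hFInt : ∀ r : ℝ, 0 ≤ r → r ≤ s → IntervalIntegrable F volume t₀ (t₀ + r) := by
      intro r hr1 hr2
      apply hInt.mono_set
      rw [uIcc_of_le (by linarith : t₀ ≤ t₀ + r), uIcc_of_le ht]
      exact Icc_subset_Icc ht₀ (by linarith)
    have hFshift : ∀ r : ℝ, 0 ≤ r → r ≤ s →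
        IntervalIntegrable (fun τ => F (t₀ + τ)) volume 0 r := by
      intro r hr1 hr2
      have := (hFInt r hr1 hr2).comp_add_left t₀
      simpa using this
    -- integral identity for the difference
    have hZeq : ∀ r ∈ Icc (0:ℝ) s, X (t₀ + r) - Y r
        = ∫ τ in (0:ℝ)..r, (F (t₀ + τ) - g (Y τ)) := by
      intro r hr
      obtain ⟨hr1, hr2⟩ := mem_Icc.mp hr
      have h1 : IntervalIntegrable F volume 0 (t₀ + r) :=
        hInt.mono_set (by
          rw [uIcc_of_le (by linarith : (0:ℝ) ≤ t₀ + r), uIcc_of_le ht]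
          exact Icc_subset_Icc le_rfl (by linarith))
      have h2 : IntervalIntegrable F volume 0 t₀ :=
        h1.mono_set (by
          rw [uIcc_of_le ht₀, uIcc_of_le (by linarith : (0:ℝ) ≤ t₀ + r)]
          exact Icc_subset_Icc le_rfl (by linarith))
      have h3 : IntervalIntegrable F volume t₀ (t₀ + r) := hFInt r hr1 hr2
      have hXdiff : X (t₀ + r) - X t₀ = ∫ τ in t₀..(t₀ + r), F τ := by
        rw [hXeq (t₀ + r) (by linarith), hXeq t₀ ht₀]
        have := intervalIntegral.integral_add_adjacent_intervals h2 h3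
        rw [← this]
        abel
      have hshift : (∫ τ in t₀..(t₀ + r), F τ) = ∫ τ in (0:ℝ)..r, F (t₀ + τ) := by
        rw [intervalIntegral.integral_comp_add_left F t₀, add_zero]
      have hYdiff : Y r - Y 0 = ∫ τ in (0:ℝ)..r, g (Y τ) := by
        rw [hYeq r hr.1]; abel
      rw [intervalIntegral.integral_sub (hFshift r hr1 hr2) (hgY r), ← hshift, ← hXdiff,
        ← hYdiff, hY0]
      abel
    -- Gronwall for u
    have hub : ∀ r ∈ Icc (0:ℝ) s, u r ≤ 0 + ∫ τ in (0:ℝ)..r, (Λ * u τ + L * c) := by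
      intro r hr
      obtain ⟨hr1, hr2⟩ := mem_Icc.mp hr
      simp only [hu]
      rw [hZeq r hr]
      have h1 : ‖∫ τ in (0:ℝ)..r, (F (t₀ + τ) - g (Y τ))‖
          ≤ ∫ τ in (0:ℝ)..r, ‖F (t₀ + τ) - g (Y τ)‖ :=
        intervalIntegral.norm_integral_le_integral_norm hr.1
      have h2 : (∫ τ in (0:ℝ)..r, ‖F (t₀ + τ) - g (Y τ)‖)
          ≤ ∫ τ in (0:ℝ)..r, (Λ * ‖X (t₀ + τ) - Y τ‖ + L * c) := by
        apply intervalIntegral.integral_mono_on hr1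
        · exact ((hFshift r hr1 hr2).sub (hgY r)).norm
        · apply ContinuousOn.intervalIntegrable
          rw [uIcc_of_le hr1]
          apply ContinuousOn.add _ continuousOn_const
          exact continuousOn_const.mul (hucont.mono (Icc_subset_Icc le_rfl hr2))
        · intro τ hτ
          obtain ⟨hτ1, hτ2⟩ := mem_Icc.mp hτ
          have hbnd : ‖F (t₀ + τ) - g (Y τ)‖
              ≤ L * |w (t₀ + τ)| + Λ * ‖X (t₀ + τ) - Y τ‖ := by
            have e1 : ‖F (t₀ + τ) - g (X (t₀ + τ))‖ ≤ L * |w (t₀ + τ)| := by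
              have := hfLip (X (t₀ + τ)) (X (t₀ + τ)) (kap (X (t₀ + τ)) + w (t₀ + τ))
                (kap (X (t₀ + τ)))
              simpa using this
            have e2 : ‖g (X (t₀ + τ)) - g (Y τ)‖ ≤ Λ * ‖X (t₀ + τ) - Y τ‖ := hgLip _ _
            calc ‖F (t₀ + τ) - g (Y τ)‖
                ≤ ‖F (t₀ + τ) - g (X (t₀ + τ))‖ + ‖g (X (t₀ + τ)) - g (Y τ)‖ := by
                  have := norm_sub_le_norm_sub_add_norm_sub (F (t₀ + τ)) (g (X (t₀ + τ))) (g (Y τ))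
                  exact this
              _ ≤ L * |w (t₀ + τ)| + Λ * ‖X (t₀ + τ) - Y τ‖ := by linarith
          have hwτ : |w (t₀ + τ)| ≤ c := hwle (t₀ + τ)
            ⟨by linarith, by linarith⟩
          have : L * |w (t₀ + τ)| ≤ L * c := by nlinarith
          linarith
      rw [zero_add]
      linarith
    have hgron := my_gronwall hΛ.le (by positivity : (0:ℝ) ≤ L * c) hucont
      (by simp only [hu]; simp [hY0]) hub s ⟨hs, le_rfl⟩
    have hYb := hYdecay s hs
    rw [hY0] at hYb
    have : ‖X (t₀ + s)‖ ≤ ‖Y s‖ + u s := by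
      simp only [hu]
      have := norm_sub_norm_le (X (t₀ + s)) (Y s)
      have h2 := norm_add_le (X (t₀+s) - Y s) (Y s)
      simp only [sub_add_cancel] at h2
      linarith
    rw [zero_add] at hgron
    calc ‖X (t₀ + s)‖ ≤ ‖Y s‖ + u s := this
      _ ≤ k * ‖X t₀‖ * Real.exp (-alpha * s) + L * c * s * Real.exp (Λ * s) := by linarith
      _ = k * Real.exp (-alpha * s) * ‖X t₀‖ + L * c * s * Real.exp (Λ * s) := by ring
  -- the iteration
  have hXnn : ∀ r : ℝ, (0:ℝ) ≤ ‖X r‖ := fun r => norm_nonneg _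
  have hσpos : 0 < sig := div_pos (Real.log_pos one_lt_two) hTpos
  have hDc : 0 ≤ D * c := by positivity
  set m : ℕ := Nat.floor (t / T) with hm
  have htT : 0 ≤ t / T := by positivity
  have hmT : (m:ℝ) * T ≤ t := by
    have h := Nat.floor_le htT
    rw [hm]
    calc ((Nat.floor (t/T) : ℕ):ℝ) * T ≤ (t/T) * T := mul_le_mul_of_nonneg_right h hTpos.le
      _ = t := by field_simp
  have htm : t ≤ ((m:ℝ) + 1) * T := by
    have h := (Nat.lt_floor_add_one (t / T)).le
    rw [hm]
    calc t = (t/T) * T := by field_simp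
      _ ≤ (((Nat.floor (t/T) : ℕ):ℝ) + 1) * T :=
          mul_le_mul_of_nonneg_right (by exact_mod_cast h) hTpos.le
  have hiter : ∀ j : ℕ, j ≤ m → ‖X ((j:ℝ) * T)‖ ≤ (1/2:ℝ)^j * ‖X 0‖ + 2 * (D * c) := by
    intro j
    induction j with
    | zero =>
      intro _
      simp only [Nat.cast_zero, zero_mul, pow_zero, one_mul]
      linarith [hXnn 0]
    | succ i ih =>
      intro him
      have hi : i ≤ m := le_trans (Nat.le_succ i) him
      have hIH := ih hi
      have hiT : (0:ℝ) ≤ (i:ℝ) * T := by positivity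
      have hi1 : ((i:ℝ) + 1) * T ≤ t := by
        have hcast : ((i:ℝ) + 1) ≤ (m:ℝ) := by exact_mod_cast him
        nlinarith
      have hk2 := key ((i:ℝ)*T) T hiT hTpos.le (by nlinarith)
      have heq : (i:ℝ)*T + T = ((i:ℝ)+1) * T := by ring
      rw [heq] at hk2
      have hstep : ‖X (((i:ℝ)+1) * T)‖ ≤ (1/2) * ‖X ((i:ℝ)*T)‖ + D * c := by
        have h1 : k * Real.exp (-alpha * T) * ‖X ((i:ℝ)*T)‖ ≤ (1/2) * ‖X ((i:ℝ)*T)‖ :=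
          mul_le_mul_of_nonneg_right hkT (hXnn _)
        have h2 : L * c * T * Real.exp (Λ * T) = D * c := by rw [hD]; ring
        linarith [hk2]
      push_cast
      calc ‖X (((i:ℝ)+1) * T)‖ ≤ (1/2) * ‖X ((i:ℝ)*T)‖ + D * c := hstep
        _ ≤ (1/2) * ((1/2:ℝ)^i * ‖X 0‖ + 2*(D*c)) + D*c := by linarith
        _ = (1/2:ℝ)^(i+1) * ‖X 0‖ + 2*(D*c) := by ring
  set s₀ : ℝ := t - (m:ℝ)*T with hs₀def
  have hs₀ : 0 ≤ s₀ := by rw [hs₀def]; linarith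
  have hs₀T : s₀ ≤ T := by rw [hs₀def]; nlinarith
  have hfin := key ((m:ℝ)*T) s₀ (by positivity) hs₀ (by rw [hs₀def]; ring_nf; exact le_rfl)
  have heqt : (m:ℝ)*T + s₀ = t := by rw [hs₀def]; ring
  rw [heqt] at hfin
  have hIm := hiter m le_rfl
  have e1 : Real.exp (-alpha * s₀) ≤ 1 := Real.exp_le_one_iff.mpr
    (by rw [neg_mul]; exact neg_nonpos.mpr (mul_nonneg halpha.le hs₀))
  have e2 : L * c * s₀ * Real.exp (Λ * s₀) ≤ D * c := by
    have hee : Real.exp (Λ * s₀) ≤ Real.exp (Λ * T) :=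
      Real.exp_le_exp.mpr (mul_le_mul_of_nonneg_left hs₀T hΛ.le)
    have h1 : L * c * s₀ ≤ L * c * T :=
      mul_le_mul_of_nonneg_left hs₀T (by positivity)
    have h2 : 0 ≤ L * c * s₀ := by positivity
    have h3 := mul_le_mul h1 hee (Real.exp_pos _).le (by positivity)
    have h4 : L * c * T * Real.exp (Λ * T) = D * c := by rw [hD]; ring
    linarith
  have e3 : k * Real.exp (-alpha * s₀) * ‖X ((m:ℝ)*T)‖ ≤ k * ‖X ((m:ℝ)*T)‖ :=
    mul_le_mul_of_nonneg_right (mul_le_of_le_one_right hk.le e1) (hXnn _)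
  have e4 : k * ‖X ((m:ℝ)*T)‖ ≤ k * ((1/2:ℝ)^m * ‖X 0‖ + 2*(D*c)) :=
    mul_le_mul_of_nonneg_left hIm hk.le
  have h4 : ‖X t‖ ≤ k * (1/2:ℝ)^m * ‖X 0‖ + (2*k+1) * (D*c) := by
    have hring : k * ((1/2:ℝ)^m * ‖X 0‖ + 2*(D*c)) + D*c
        = k * (1/2:ℝ)^m * ‖X 0‖ + (2*k+1) * (D*c) := by ring
    linarith
  have hhalf : ∀ N : ℕ, Real.exp (-((N:ℝ) * Real.log 2)) = (1/2:ℝ)^N := by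
    intro N
    rw [Real.exp_neg, Real.exp_nat_mul, Real.exp_log two_pos, ← inv_pow]
    norm_num
  have hσT : sig * T = Real.log 2 := by rw [hsig]; field_simp
  have hmono : Real.exp (-(((m:ℝ)+1) * Real.log 2)) ≤ Real.exp (-sig * t) := by
    apply Real.exp_le_exp.mpr
    have h5 : sig * t ≤ sig * (((m:ℝ)+1)*T) := mul_le_mul_of_nonneg_left htm hσpos.le
    nlinarith [hσT]
  have hpow : k * (1/2:ℝ)^m ≤ 2 * k * Real.exp (-sig * t) := by
    have h6 := hhalf (m+1)
    push_cast at h6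
    calc k * (1/2:ℝ)^m = 2 * k * (1/2:ℝ)^(m+1) := by ring
      _ ≤ 2 * k * Real.exp (-sig * t) := by
          apply mul_le_mul_of_nonneg_left _ (by positivity : (0:ℝ) ≤ 2*k)
          rw [← h6]
          push_cast
          exact hmono
  have hfinal := mul_le_mul_of_nonneg_right hpow (norm_nonneg (X 0))
  calc ‖X t‖ ≤ k * (1/2:ℝ)^m * ‖X 0‖ + (2*k+1) * (D*c) := h4
    _ ≤ 2 * k * Real.exp (-sig * t) * ‖X 0‖ + (2*k+1) * (D*c) := by linarith
    _ = 2 * k * ‖X 0‖ * Real.exp (-sig * t) + (2*k+1) * D * c := by ring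
end

section
/- Let X ∈ ℝⁿ, and let u, w ∈ L^∞([0,D];ℝ) be related by the inverse backstepping transformation so that M₄(|X| + ||u||_∞) ≤ |X| + ||w||_∞. Let μ > 0 and suppose the quantized predictor mismatch d := κ(p_μ(D)) − κ(p(D)) satisfies |d| ≤ M₅(|q_{1μ}(X) − X| + ||q_{2μ}(u) − u||_∞), where the dynamic quantizer satisfies property (P1): if |Y| + ||v||_∞ ≤ Mμ then |q_{1μ}(Y) − Y| + ||q_{2μ}(v) − v||_∞ ≤ Δμ. If the zoom condition Ω M₄Mμ/(1+M₀)² ≤ |X| + ||w||_∞ ≤ M₄Mμ holds, where Ω = M₅Δ(1+λ)(1+M₀)²/(M₄M), then |d| ≤ (1/(1+λ))·(|X| + ||w||_∞). -/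
/-- small-gain assignment of the quantized predictor mismatch, state
quantization.  Suppose `M₄(|X| + ‖u‖_∞) ≤ |X| + ‖w‖_∞` (inverse backstepping), the
mismatch `d = κ(p_μ(D)) − κ(p(D))` satisfies
`|d| ≤ M₅(|q_{1μ}(X) − X| + ‖q_{2μ}(u) − u‖_∞)`, the dynamic quantizer satisfies the
`μ`-scaled property (P1), and the zoom condition
`Ω M₄Mμ/(1+M₀)² ≤ |X| + ‖w‖_∞ ≤ M₄Mμ` holds with `Ω = M₅Δ(1+λ)(1+M₀)²/(M₄M)`.  Then
`|d| ≤ (1/(1+λ))(|X| + ‖w‖_∞)`. -/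
theorem statement_15 {n : ℕ}
    (L k0 D : ℝ) (hL : 0 < L) (hk0 : 0 < k0) (hD : 0 < D)
    (M Del lam M0 mu : ℝ)
    (hDel : 0 < Del) (hDelM : Del < M) (hlam : 0 < lam) (hM0 : 0 < M0) (hmu : 0 < mu)
    (M4 M5 Om : ℝ)
    (hM4 : M4 = (1 + k0 * max 1 (k0 * L * D) * Real.exp (L * D * (1 + k0)))⁻¹)
    (hM5 : M5 = k0 * max 1 (L * D) * Real.exp (L * D))
    (hOm : Om = M5 * Del * (1 + lam) * (1 + M0) ^ 2 / (M4 * M))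
    (q1mu : EuclideanSpace ℝ (Fin n) → EuclideanSpace ℝ (Fin n)) (q2mu : ℝ → ℝ)
    (P1 : ∀ (Y : EuclideanSpace ℝ (Fin n)) (v : ℝ → ℝ),
        ‖Y‖ + supN D v ≤ M * mu →
        ‖q1mu Y - Y‖ + supN D (fun x => q2mu (v x) - v x) ≤ Del * mu)
    (X : EuclideanSpace ℝ (Fin n)) (u w : ℝ → ℝ) (d : ℝ)
    (hinv : M4 * (‖X‖ + supN D u) ≤ ‖X‖ + supN D w)
    (hd : |d| ≤ M5 * (‖q1mu X - X‖ + supN D (fun x => q2mu (u x) - u x)))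
    (hzoom_lo : Om * M4 * M * mu / (1 + M0) ^ 2 ≤ ‖X‖ + supN D w)
    (hzoom_hi : ‖X‖ + supN D w ≤ M4 * M * mu) :
    |d| ≤ (1 / (1 + lam)) * (‖X‖ + supN D w) := by
  have hM4pos : 0 < M4 := by
    rw [hM4]
    have : 0 < 1 + k0 * max 1 (k0 * L * D) * Real.exp (L * D * (1 + k0)) := by
      positivity
    exact inv_pos.mpr this
  have hM5pos : 0 < M5 := by
    rw [hM5]
    have h1 : (0:ℝ) < max 1 (L * D) := lt_of_lt_of_le one_pos (le_max_left _ _)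
    positivity
  have hMpos : 0 < M := hDel.trans hDelM
  -- from hinv and hzoom_hi: ‖X‖ + supN D u ≤ M * mu
  have hle : ‖X‖ + supN D u ≤ M * mu := by
    have h := hinv.trans hzoom_hi
    rw [mul_assoc] at h; have := (mul_le_mul_iff_right₀ hM4pos).mp h
    linarith
  have hq := P1 X u hle
  have hdle : |d| ≤ M5 * (Del * mu) :=
    hd.trans (by nlinarith)
  -- compute the lower zoom bound
  have hkey : Om * M4 * M * mu / (1 + M0) ^ 2 = M5 * Del * (1 + lam) * mu := by
    rw [hOm]
    have h1 : (1 + M0) ^ 2 ≠ 0 := by positivity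
    have h2 : M4 * M ≠ 0 := by positivity
    field_simp
  rw [hkey] at hzoom_lo
  have hlam1 : (0:ℝ) < 1 + lam := by linarith
  rw [div_mul_eq_mul_div, le_div_iff₀ hlam1] at *
  nlinarith
end

section
/- Let X ∈ ℝⁿ, and let u, w ∈ L^∞([0,D];ℝ) be related by the inverse backstepping transformation so that M₄(|X| + ||u||_∞) ≤ |X| + ||w||_∞. Let μ > 0 and let U_nom = κ(p(D)), which satisfies |U_nom| ≤ M₅(|X| + ||u||_∞). Suppose the input quantizer q̄ satisfies property (P̄1): if |Ū| ≤ M then |q̄(Ū) − Ū| ≤ Δ. If the zoom condition ΩMM₄μ/((1+M₀)²M₅) ≤ |X| + ||w||_∞ ≤ M₄Mμ/M₅ holds, where Ω = M₅Δ(1+λ)(1+M₀)²/(M₄M), then the quantization error d̄ := U_nom − μq̄(U_nom/μ) satisfies |d̄| ≤ (1/(1+λ))·(|X| + ||w||_∞). -/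
/-- small-gain assignment of the quantization error, input quantization.
Suppose `M₄(|X| + ‖u‖_∞) ≤ |X| + ‖w‖_∞` (inverse backstepping), the nominal predictor
feedback satisfies `|U_nom| ≤ M₅(|X| + ‖u‖_∞)`, the input quantizer satisfies (P̄1), and the
zoom condition `ΩMM₄μ/((1+M₀)²M₅) ≤ |X| + ‖w‖_∞ ≤ M₄Mμ/M₅` holds with
`Ω = M₅Δ(1+λ)(1+M₀)²/(M₄M)`.  Then `d̄ = U_nom − μ q̄(U_nom/μ)` satisfies
`|d̄| ≤ (1/(1+λ))(|X| + ‖w‖_∞)`. -/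
theorem statement_16 {n : ℕ}
    (L k0 D : ℝ) (hL : 0 < L) (hk0 : 0 < k0) (hD : 0 < D)
    (M Del lam M0 mu : ℝ)
    (hDel : 0 < Del) (hDelM : Del < M) (hlam : 0 < lam) (hM0 : 0 < M0) (hmu : 0 < mu)
    (M4 M5 Om : ℝ)
    (hM4 : M4 = (1 + k0 * max 1 (k0 * L * D) * Real.exp (L * D * (1 + k0)))⁻¹)
    (hM5 : M5 = k0 * max 1 (L * D) * Real.exp (L * D))
    (hOm : Om = M5 * Del * (1 + lam) * (1 + M0) ^ 2 / (M4 * M))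
    (qbar : ℝ → ℝ)
    (P1bar : ∀ Ub : ℝ, |Ub| ≤ M → |qbar Ub - Ub| ≤ Del)
    (X : EuclideanSpace ℝ (Fin n)) (u w : ℝ → ℝ) (Unom : ℝ)
    (hinv : M4 * (‖X‖ + supN D u) ≤ ‖X‖ + supN D w)
    (hUnom : |Unom| ≤ M5 * (‖X‖ + supN D u))
    (hzoom_lo : Om * M * M4 * mu / ((1 + M0) ^ 2 * M5) ≤ ‖X‖ + supN D w)
    (hzoom_hi : ‖X‖ + supN D w ≤ M4 * M * mu / M5) :
    |Unom - mu * qbar (Unom / mu)| ≤ (1 / (1 + lam)) * (‖X‖ + supN D w) := by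

  have hM : 0 < M := hDel.trans hDelM
  have hM5pos : 0 < M5 := by
    rw [hM5]
    have : (0:ℝ) < max 1 (L*D) := lt_of_lt_of_le one_pos (le_max_left _ _)
    positivity
  have hM4pos : 0 < M4 := by
    rw [hM4]
    have h1 : (0:ℝ) < max 1 (k0*L*D) := lt_of_lt_of_le one_pos (le_max_left _ _)
    have h2 : (0:ℝ) < 1 + k0 * max 1 (k0*L*D) * Real.exp (L * D * (1 + k0)) := by positivity
    exact inv_pos.mpr h2
  set S := ‖X‖ + supN D w with hS
  -- |Unom/mu| ≤ M
  have hUM : |Unom| ≤ M * mu := by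
    have h1 : M5 * (‖X‖ + supN D u) ≤ (M5 / M4) * S := by
      rw [div_mul_eq_mul_div, le_div_iff₀ hM4pos]
      calc M5 * (‖X‖ + supN D u) * M4 = M5 * (M4 * (‖X‖ + supN D u)) := by ring
        _ ≤ M5 * S := by
            exact mul_le_mul_of_nonneg_left hinv hM5pos.le
    have h2 : (M5 / M4) * S ≤ M * mu := by
      calc (M5 / M4) * S ≤ (M5 / M4) * (M4 * M * mu / M5) := by
            exact mul_le_mul_of_nonneg_left hzoom_hi (by positivity)
        _ = M * mu := by field_simp
    exact hUnom.trans (h1.trans h2)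
  have hdiv : |Unom / mu| ≤ M := by
    rw [abs_div, abs_of_pos hmu, div_le_iff₀ hmu]
    exact hUM
  have hq := P1bar (Unom / mu) hdiv
  have hd : |Unom - mu * qbar (Unom / mu)| ≤ mu * Del := by
    have : Unom - mu * qbar (Unom / mu) = -(mu * (qbar (Unom / mu) - Unom / mu)) := by
      field_simp
      ring
    rw [this, abs_neg, abs_mul, abs_of_pos hmu]
    exact mul_le_mul_of_nonneg_left hq hmu.le
  -- lower zoom gives mu * Del ≤ S / (1+lam)
  have hlo : Del * (1 + lam) * mu ≤ S := by
    have he : Om * M * M4 * mu / ((1 + M0) ^ 2 * M5) = Del * (1 + lam) * mu := by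
      rw [hOm]
      have hM0' : (0:ℝ) < (1 + M0)^2 := by positivity
      field_simp
    rwa [he] at hzoom_lo
  have hfin : mu * Del ≤ (1 / (1 + lam)) * S := by
    rw [one_div, inv_mul_eq_div, le_div_iff₀ (by positivity : (0:ℝ) < 1 + lam)]
    calc mu * Del * (1 + lam) = Del * (1 + lam) * mu := by ring
      _ ≤ S := hlo
  exact hd.trans hfin
end
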